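/- arXiv:2405.01069 — 4 statements merged into one kernel-verified Lean document; each statement's English description precedes it below -/
import Mathlib

section
/- In a median order v_1, ..., v_N of a tournament T (an ordering maximizing the number of forward edges), for every index i and every j < i, at least half of the vertices v_j, v_{j+1}, ..., v_{i-1} are in-neighbors of v_i. -/
open scoped Classical

/-!
Moving `v_i` to position `j` (the positions `j, …, i-1` shift up by one, i.e. the new position
of a vertex is given by `Fin.cycleIcc j i`) reverses exactly the pairs `{v_m, v_i}` with
`j ≤ m < i` and keeps the relative order of every other pair. The new order therefore gains the
out-neighbours of `v_i` among `v_j, …, v_{i-1}` and loses its in-neighbours there. Maximality of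
the median order forces #out ≤ #in, while #in + #out = i - j.
-/

open Finset Equiv

theorem card_filter_perm_symm {α : Type*} [Fintype α] (R T : α → α → Prop) [DecidableRel R]
    [DecidableRel T] (σ : Perm α) :
    #{p : α × α | R p.1 p.2 ∧ T (σ.symm p.1) (σ.symm p.2)} =
      #{p : α × α | R (σ p.1) (σ p.2) ∧ T p.1 p.2} :=
  card_equiv (σ.prodCongr σ).symm (by simp)

section LinearOrder

variable {α : Type*} [Fintype α] [LinearOrder α] (T : α → α → Prop) [DecidableRel T]
  (σ : Perm α)

theorem filter_perm_lt_sdiff_filter_lt :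
    univ.filter (fun p : α × α => σ p.1 < σ p.2 ∧ T p.1 p.2) \
        univ.filter (fun p : α × α => p.1 < p.2 ∧ T p.1 p.2) =
      univ.filter (fun p : α × α => p.2 < p.1 ∧ σ p.1 < σ p.2 ∧ T p.1 p.2) := by
  ext p
  have : σ p.1 < σ p.2 → p.1 ≠ p.2 := fun h hp => h.ne (hp ▸ rfl)
  simp only [mem_sdiff, mem_filter, mem_univ, true_and]
  grind

theorem filter_lt_sdiff_filter_perm_lt :
    univ.filter (fun p : α × α => p.1 < p.2 ∧ T p.1 p.2) \
        univ.filter (fun p : α × α => σ p.1 < σ p.2 ∧ T p.1 p.2) =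
      univ.filter (fun p : α × α => p.1 < p.2 ∧ σ p.2 < σ p.1 ∧ T p.1 p.2) := by
  ext p
  have : p.1 < p.2 → σ p.1 ≠ σ p.2 := fun h hp => h.ne (σ.injective hp)
  simp only [mem_sdiff, mem_filter, mem_univ, true_and]
  grind

end LinearOrder

namespace Fin

variable {n : ℕ} (T : Fin n → Fin n → Prop)

theorem card_inNbrs_add_card_outNbrs (htour : ∀ a b : Fin n, a ≠ b → (T a b ↔ ¬ T b a))
    (j i : Fin n) :
    #{m : Fin n | j ≤ m ∧ m < i ∧ T m i} + #{m : Fin n | j ≤ m ∧ m < i ∧ T i m} = i - j := by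
  rw [← card_Ico, ← card_filter_add_card_filter_not (s := Ico j i) (fun m => T m i)]
  congr 1 <;> congr 1 <;> ext m <;>
    simp only [mem_filter, mem_Ico, mem_univ, true_and, and_assoc]
  exact and_congr_right fun _ => and_congr_right fun hmi => htour i m hmi.ne'

variable {j i : Fin n}

theorem val_cycleIcc (hji : j ≤ i) (k : Fin n) :
    (cycleIcc j i k : ℕ) = if k = i then (j : ℕ) else if j ≤ k ∧ k < i then k + 1 else k := by
  have := NeZero.of_pos j.pos
  rcases lt_or_ge k j with hkj | hjk
  · rw [cycleIcc_of_lt hkj, if_neg (by omega), if_neg (by omega)]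
  rcases lt_or_ge i k with hik | hki
  · rw [cycleIcc_of_gt hik, if_neg (by omega), if_neg (by omega)]
  rw [cycleIcc_of_le_of_le hjk hki]
  split_ifs with hk hk'
  · rfl
  · exact val_add_one_of_lt' (by omega)
  · exact absurd ⟨hjk, lt_of_le_of_ne hki hk⟩ hk'

theorem lt_and_cycleIcc_lt_iff (hji : j ≤ i) {a b : Fin n} :
    a < b ∧ cycleIcc j i b < cycleIcc j i a ↔ b = i ∧ j ≤ a ∧ a < i := by
  simp only [lt_def, le_def, Fin.ext_iff, val_cycleIcc hji]
  split_ifs <;> omega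

theorem card_cycleIcc_inversions_out (hji : j ≤ i) :
    #{p : Fin n × Fin n | p.2 < p.1 ∧ cycleIcc j i p.1 < cycleIcc j i p.2 ∧ T p.1 p.2} =
      #{m : Fin n | j ≤ m ∧ m < i ∧ T i m} := by
  symm
  rw [← card_map (Function.Embedding.sectR i _)]
  congr 1
  ext ⟨a, b⟩
  simp only [mem_map, mem_filter, mem_univ, true_and, Function.Embedding.sectR_apply,
    Prod.mk.injEq, ← and_assoc, lt_and_cycleIcc_lt_iff hji]
  grind

theorem card_cycleIcc_inversions_in (hji : j ≤ i) :
    #{p : Fin n × Fin n | p.1 < p.2 ∧ cycleIcc j i p.2 < cycleIcc j i p.1 ∧ T p.1 p.2} =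
      #{m : Fin n | j ≤ m ∧ m < i ∧ T m i} := by
  symm
  rw [← card_map (Function.Embedding.sectL _ i)]
  congr 1
  ext ⟨a, b⟩
  simp only [mem_map, mem_filter, mem_univ, true_and, Function.Embedding.sectL_apply,
    Prod.mk.injEq, ← and_assoc, lt_and_cycleIcc_lt_iff hji]
  grind

end Fin

theorem median_order_half_inneighbors_general (N : ℕ) (T : Fin N → Fin N → Prop)
    (htour : ∀ i j : Fin N, i ≠ j → (T i j ↔ ¬ T j i))
    (hmedian : ∀ σ : Equiv.Perm (Fin N),
      (Finset.univ.filter (fun p : Fin N × Fin N => p.1 < p.2 ∧ T (σ p.1) (σ p.2))).card ≤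
      (Finset.univ.filter (fun p : Fin N × Fin N => p.1 < p.2 ∧ T p.1 p.2)).card)
    (i j : Fin N) (hji : j < i) :
    (i : ℕ) - (j : ℕ) ≤
      2 * (Finset.univ.filter (fun m : Fin N => j ≤ m ∧ m < i ∧ T m i)).card := by
  have hmoved := hmedian (Fin.cycleIcc j i).symm
  -- pairs kept in order by `cycleIcc j i` count on both sides and cancel
  rw [card_filter_perm_symm, ← card_sdiff_le_card_sdiff_iff, filter_perm_lt_sdiff_filter_lt,
    filter_lt_sdiff_filter_perm_lt, Fin.card_cycleIcc_inversions_out T hji.le,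
    Fin.card_cycleIcc_inversions_in T hji.le] at hmoved
  have hsplit := Fin.card_inNbrs_add_card_outNbrs T htour j i
  omega

/-- In a median order `v_0, …, v_{N-1}` of a tournament `T` (an ordering maximizing the
number of forward edges), for every index `i` and every `j < i`, at least half of the
vertices `v_j, …, v_{i-1}` are in-neighbors of `v_i`. -/
theorem median_order_half_inneighbors (N : ℕ) (T : Fin N → Fin N → Prop)
    (hirr : ∀ i, ¬ T i i)
    (htour : ∀ i j : Fin N, i ≠ j → (T i j ↔ ¬ T j i))
    (hmedian : ∀ σ : Equiv.Perm (Fin N),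
      (Finset.univ.filter (fun p : Fin N × Fin N => p.1 < p.2 ∧ T (σ p.1) (σ p.2))).card ≤
      (Finset.univ.filter (fun p : Fin N × Fin N => p.1 < p.2 ∧ T p.1 p.2)).card)
    (i j : Fin N) (hji : j < i) :
    (i : ℕ) - (j : ℕ) ≤
      2 * (Finset.univ.filter (fun m : Fin N => j ≤ m ∧ m < i ∧ T m i)).card :=
  median_order_half_inneighbors_general N T htour hmedian i j hji
end

section
/- Let T be a tournament with a median order v_1, ..., v_N, let a, a', b, ℓ, s, k, Δ be positive integers with 2a' ≥ a, let 2ka' < j ≤ N - a + 1, and let B ⊆ {v_j, ..., v_{j+a-1}} with |B| = b. Then for every vertex v_i with j ≤ i < j + a, the number of in-neighbors of v_i among {v_{j-2ka'}, ..., v_{j-1}} is at least (k-1)a'. -/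
open scoped Classical

private lemma card_fin_interval (N lo hi : ℕ) (h : hi ≤ N) :
    (Finset.univ.filter fun m : Fin N => lo ≤ (m : ℕ) ∧ (m : ℕ) < hi).card = hi - lo := by
  have himg : (Finset.univ.filter fun m : Fin N => lo ≤ (m : ℕ) ∧ (m : ℕ) < hi).image Fin.val
      = Finset.Ico lo hi := by
    ext n
    simp only [Finset.mem_image, Finset.mem_filter, Finset.mem_univ, true_and, Finset.mem_Ico]
    constructor
    · rintro ⟨m, ⟨h1, h2⟩, rfl⟩; exact ⟨h1, h2⟩
    · rintro ⟨h1, h2⟩; exact ⟨⟨n, by omega⟩, ⟨h1, h2⟩, rfl⟩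
  rw [← Nat.card_Ico lo hi, ← himg, Finset.card_image_of_injective _ Fin.val_injective]

private def shiftPerm (N p : ℕ) (i : Fin N) (hp : p ≤ (i : ℕ)) : Equiv.Perm (Fin N) where
  toFun t := if (t : ℕ) = p then i
    else if h : p < (t : ℕ) ∧ (t : ℕ) ≤ (i : ℕ) then ⟨(t : ℕ) - 1, by omega⟩ else t
  invFun t := if (t : ℕ) = (i : ℕ) then ⟨p, lt_of_le_of_lt hp i.isLt⟩
    else if h : p ≤ (t : ℕ) ∧ (t : ℕ) < (i : ℕ) then ⟨(t : ℕ) + 1, by omega⟩ else t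
  left_inv := by
    intro t
    have hiN := i.isLt
    dsimp only
    split_ifs <;> (try rfl) <;> apply Fin.ext <;> simp_all <;> omega
  right_inv := by
    intro t
    have hiN := i.isLt
    dsimp only
    split_ifs <;> (try rfl) <;> apply Fin.ext <;> simp_all <;> omega

private lemma shiftPerm_symm_val (N p : ℕ) (i : Fin N) (hp : p ≤ (i : ℕ)) (t : Fin N) :
    (((shiftPerm N p i hp).symm t : ℕ)) =
      if (t : ℕ) = (i : ℕ) then p
      else if p ≤ (t : ℕ) ∧ (t : ℕ) < (i : ℕ) then (t : ℕ) + 1 else (t : ℕ) := by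
  simp only [shiftPerm, Equiv.coe_fn_symm_mk]
  split_ifs <;> rfl

/-- In a median order `v_0, …, v_{N-1}` of a tournament, with positive parameters
`a, a', b, ℓ, s, k, Δ` satisfying `2a' ≥ a`, an index `j` with `2ka' ≤ j` and `j + a ≤ N`,
and a set `B ⊆ [j, j+a)` of size `b`, every vertex `v_i` with `j ≤ i < j + a` has at least
`(k-1)a'` in-neighbors among the vertices `v_{j-2ka'}, …, v_{j-1}`. -/
theorem median_order_many_inneighbors (N a a' b ℓ s k Δ : ℕ)
    (ha : 0 < a) (ha' : 0 < a') (hb : 0 < b) (hℓ : 0 < ℓ) (hs : 0 < s) (hk : 0 < k)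
    (hΔ : 0 < Δ) (haa' : a ≤ 2 * a')
    (T : Fin N → Fin N → Prop)
    (hirr : ∀ i, ¬ T i i)
    (htour : ∀ i j : Fin N, i ≠ j → (T i j ↔ ¬ T j i))
    (hmedian : ∀ σ : Equiv.Perm (Fin N),
      (Finset.univ.filter (fun p : Fin N × Fin N => p.1 < p.2 ∧ T (σ p.1) (σ p.2))).card ≤
      (Finset.univ.filter (fun p : Fin N × Fin N => p.1 < p.2 ∧ T p.1 p.2)).card)
    (j : ℕ) (hj₁ : 2 * k * a' ≤ j) (hj₂ : j + a ≤ N)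
    (B : Finset (Fin N)) (hB : ∀ x ∈ B, j ≤ (x : ℕ) ∧ (x : ℕ) < j + a) (hBcard : B.card = b)
    (i : Fin N) (hij : j ≤ (i : ℕ)) (hia : (i : ℕ) < j + a) :
    (k - 1) * a' ≤
      (Finset.univ.filter
        (fun m : Fin N => j - 2 * k * a' ≤ (m : ℕ) ∧ (m : ℕ) < j ∧ T m i)).card := by
  classical
  set p := j - 2 * k * a' with hp
  have hpj : p + 2 * k * a' = j := by omega
  have hiN : (i : ℕ) < N := i.isLt
  have hpi : p ≤ (i : ℕ) := by omega
  set π : Equiv.Perm (Fin N) := shiftPerm N p i hpi with hπdef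
  have gval : ∀ t : Fin N, ((π.symm t : ℕ)) =
      if (t : ℕ) = (i : ℕ) then p
      else if p ≤ (t : ℕ) ∧ (t : ℕ) < (i : ℕ) then (t : ℕ) + 1 else (t : ℕ) :=
    shiftPerm_symm_val N p i hpi
  set A : Finset (Fin N × Fin N) :=
    Finset.univ.filter (fun q : Fin N × Fin N => π.symm q.1 < π.symm q.2 ∧ T q.1 q.2) with hA
  set Bs : Finset (Fin N × Fin N) :=
    Finset.univ.filter (fun q : Fin N × Fin N => q.1 < q.2 ∧ T q.1 q.2) with hBs
  -- step 1: A.card equals the permuted count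
  have step1 : A.card =
      (Finset.univ.filter (fun q : Fin N × Fin N => q.1 < q.2 ∧ T (π q.1) (π q.2))).card := by
    refine Finset.card_bij' (fun q _ => (π.symm q.1, π.symm q.2)) (fun q _ => (π q.1, π q.2)) ?_ ?_ ?_ ?_
    · intro q hq
      simp only [hA, Finset.mem_filter, Finset.mem_univ, true_and] at hq ⊢
      simpa using hq
    · intro q hq
      simp only [hA, Finset.mem_filter, Finset.mem_univ, true_and] at hq ⊢
      simpa using hq
    · intro q _; simp
    · intro q _; simp
  have step2 : A.card ≤ Bs.card := step1 ▸ hmedian π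
  have step3 : A.card + (Bs \ A).card = Bs.card + (A \ Bs).card := by
    have h1 := Finset.card_inter_add_card_sdiff A Bs
    have h2 := Finset.card_inter_add_card_sdiff Bs A
    rw [Finset.inter_comm] at h2
    omega
  set INs : Finset (Fin N) :=
    Finset.univ.filter (fun m : Fin N => p ≤ (m : ℕ) ∧ (m : ℕ) < (i : ℕ) ∧ T m i) with hINs
  set OUTs : Finset (Fin N) :=
    Finset.univ.filter (fun m : Fin N => p ≤ (m : ℕ) ∧ (m : ℕ) < (i : ℕ) ∧ T i m) with hOUTs
  -- step 4 : (Bs \ A).card = INs.card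
  have step4 : (Bs \ A).card = INs.card := by
    refine Finset.card_bij' (fun q _ => q.1) (fun m _ => (m, i)) ?_ ?_ ?_ ?_
    · rintro ⟨u, v⟩ hq
      simp only [hBs, hA, Finset.mem_sdiff, Finset.mem_filter, Finset.mem_univ, true_and] at hq
      obtain ⟨⟨hlt, hT⟩, hn⟩ := hq
      have hlt' : (u : ℕ) < (v : ℕ) := hlt
      have hns : ¬ ((π.symm u : ℕ) < (π.symm v : ℕ)) := fun h => hn ⟨h, hT⟩
      rw [gval, gval] at hns
      have h2 : (v : ℕ) = (i : ℕ) ∧ p ≤ (u : ℕ) ∧ (u : ℕ) < (i : ℕ) := by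
        split_ifs at hns <;> omega
      have hv : v = i := Fin.ext h2.1
      simp only [hINs, Finset.mem_filter, Finset.mem_univ, true_and]
      exact ⟨h2.2.1, h2.2.2, hv ▸ hT⟩
    · intro m hm
      simp only [hINs, Finset.mem_filter, Finset.mem_univ, true_and] at hm
      obtain ⟨h1, h2, hT⟩ := hm
      simp only [hBs, hA, Finset.mem_sdiff, Finset.mem_filter, Finset.mem_univ, true_and]
      refine ⟨⟨h2, hT⟩, fun hc => ?_⟩
      have hlt : (π.symm m : ℕ) < (π.symm i : ℕ) := hc.1
      rw [gval, gval] at hlt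
      split_ifs at hlt <;> omega
    · rintro ⟨u, v⟩ hq
      simp only [hBs, hA, Finset.mem_sdiff, Finset.mem_filter, Finset.mem_univ, true_and] at hq
      obtain ⟨⟨hlt, hT⟩, hn⟩ := hq
      have hns : ¬ ((π.symm u : ℕ) < (π.symm v : ℕ)) := fun h => hn ⟨h, hT⟩
      rw [gval, gval] at hns
      have hlt' : (u : ℕ) < (v : ℕ) := hlt
      have h2 : (v : ℕ) = (i : ℕ) := by split_ifs at hns <;> omega
      have hv : v = i := Fin.ext h2
      subst hv; rfl
    · intro m _; rfl
  -- step 5 : (A \ Bs).card = OUTs.card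
  have step5 : (A \ Bs).card = OUTs.card := by
    refine Finset.card_bij' (fun q _ => q.2) (fun m _ => (i, m)) ?_ ?_ ?_ ?_
    · rintro ⟨u, v⟩ hq
      simp only [hBs, hA, Finset.mem_sdiff, Finset.mem_filter, Finset.mem_univ, true_and] at hq
      obtain ⟨⟨hlt, hT⟩, hn⟩ := hq
      have hns : ¬ ((u : ℕ) < (v : ℕ)) := fun h => hn ⟨h, hT⟩
      have hlt' : (π.symm u : ℕ) < (π.symm v : ℕ) := hlt
      rw [gval, gval] at hlt'
      have h2 : (u : ℕ) = (i : ℕ) ∧ p ≤ (v : ℕ) ∧ (v : ℕ) < (i : ℕ) := by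
        split_ifs at hlt' <;> omega
      have hu : u = i := Fin.ext h2.1
      simp only [hOUTs, Finset.mem_filter, Finset.mem_univ, true_and]
      exact ⟨h2.2.1, h2.2.2, hu ▸ hT⟩
    · intro m hm
      simp only [hOUTs, Finset.mem_filter, Finset.mem_univ, true_and] at hm
      obtain ⟨h1, h2, hT⟩ := hm
      simp only [hBs, hA, Finset.mem_sdiff, Finset.mem_filter, Finset.mem_univ, true_and]
      constructor
      · refine ⟨?_, hT⟩
        show (π.symm i : ℕ) < (π.symm m : ℕ)
        rw [gval, gval]
        split_ifs <;> omega
      · rintro ⟨hlt, -⟩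
        have : (i : ℕ) < (m : ℕ) := hlt
        omega
    · rintro ⟨u, v⟩ hq
      simp only [hBs, hA, Finset.mem_sdiff, Finset.mem_filter, Finset.mem_univ, true_and] at hq
      obtain ⟨⟨hlt, hT⟩, hn⟩ := hq
      have hns : ¬ ((u : ℕ) < (v : ℕ)) := fun h => hn ⟨h, hT⟩
      have hlt' : (π.symm u : ℕ) < (π.symm v : ℕ) := hlt
      rw [gval, gval] at hlt'
      have h2 : (u : ℕ) = (i : ℕ) := by split_ifs at hlt' <;> omega
      have hu : u = i := Fin.ext h2
      subst hu; rfl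
    · intro m _; rfl
  -- step 6 : INs.card + OUTs.card = i - p
  have step6 : INs.card + OUTs.card = (i : ℕ) - p := by
    have hS := Finset.card_filter_add_card_filter_not
      (s := Finset.univ.filter (fun m : Fin N => p ≤ (m : ℕ) ∧ (m : ℕ) < (i : ℕ)))
      (fun m : Fin N => T m i)
    have e1 : (Finset.univ.filter (fun m : Fin N => p ≤ (m : ℕ) ∧ (m : ℕ) < (i : ℕ))).filter
        (fun m : Fin N => T m i) = INs := by
      rw [Finset.filter_filter]
      ext m
      simp only [hINs, Finset.mem_filter, Finset.mem_univ, true_and]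
      tauto
    have e2 : (Finset.univ.filter (fun m : Fin N => p ≤ (m : ℕ) ∧ (m : ℕ) < (i : ℕ))).filter
        (fun m : Fin N => ¬ T m i) = OUTs := by
      rw [Finset.filter_filter]
      ext m
      simp only [hOUTs, Finset.mem_filter, Finset.mem_univ, true_and]
      constructor
      · rintro ⟨⟨h1, h2⟩, h3⟩
        have hne : i ≠ m := fun h => by rw [h] at h2; omega
        exact ⟨h1, h2, (htour i m hne).mpr h3⟩
      · rintro ⟨h1, h2, h3⟩
        have hne : i ≠ m := fun h => by rw [h] at h2; omega
        exact ⟨⟨h1, h2⟩, (htour i m hne).mp h3⟩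
    rw [e1, e2] at hS
    rw [hS, card_fin_interval N p (i : ℕ) (by omega)]
  -- step 7 : split INs at j
  set G : Finset (Fin N) :=
    Finset.univ.filter (fun m : Fin N => p ≤ (m : ℕ) ∧ (m : ℕ) < j ∧ T m i) with hG
  have step7 : INs.card = G.card +
      (INs.filter (fun m : Fin N => ¬ (m : ℕ) < j)).card := by
    have hS := Finset.card_filter_add_card_filter_not
      (s := INs) (fun m : Fin N => (m : ℕ) < j)
    have e1 : INs.filter (fun m : Fin N => (m : ℕ) < j) = G := by
      ext m
      simp only [hINs, hG, Finset.mem_filter, Finset.mem_univ, true_and]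
      constructor
      · rintro ⟨⟨h1, h2, h3⟩, h4⟩; exact ⟨h1, h4, h3⟩
      · rintro ⟨h1, h2, h3⟩; exact ⟨⟨h1, by omega, h3⟩, h2⟩
    rw [e1] at hS
    omega
  have step7b : (INs.filter (fun m : Fin N => ¬ (m : ℕ) < j)).card ≤ (i : ℕ) - j := by
    rw [← card_fin_interval N j (i : ℕ) (by omega)]
    apply Finset.card_le_card
    intro m hm
    simp only [hINs, Finset.mem_filter, Finset.mem_univ, true_and] at hm ⊢
    omega
  -- final arithmetic
  have hOUTle : OUTs.card ≤ INs.card := by omega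
  have hk2 : 2 * k * a' = 2 * ((k - 1) * a') + 2 * a' := by
    obtain ⟨k', rfl⟩ : ∃ k', k = k' + 1 := ⟨k - 1, by omega⟩
    simp only [Nat.add_sub_cancel]
    ring
  obtain ⟨X, hX⟩ : ∃ X, (k - 1) * a' = X := ⟨_, rfl⟩
  rw [hX] at hk2 ⊢
  omega
end

section
/- Let k ≥ 2 and let x be a real with x ≥ (10^8·log k)/2. There exists a tournament R on vertex set [k] such that for all functions f, g : [k] → [0,1] with f(i) + g(i) ≤ 1 for all i and Σ_i (f(i) + g(i)) = 2x, one has Σ_{(i,j) ∈ E(R)} f(i)·g(j) ≤ 0.51·x². -/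
open scoped Classical
open Finset Real

/-!
Take a uniformly random tournament `R`, i.e. count over the orientations `σ` of the pairs `i < j`.
Writing `[R i j] = (1 + ε i j) / 2` off the diagonal with
`ε` skew-symmetric, the weight `∑_{R i j} f i g j` is at most `(∑ f)(∑ g)/2 ≤ x²/2` plus half the
skew form `∑ f i g j ε i j`. That form is bilinear and `f, g` range over polytopes whose vertices
are indicators of sets of size at most `m = ⌈2x⌉`, so it suffices that `∑_{A × B} ε ≤ 0.02 x²`
for all such `A, B`. Each of these sums is a sum of at most `2m²` independent signs, so a
Chernoff bound and a union bound over the `≤ (k+1)^{2m}` pairs `(A, B)` produce one `R` that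
works for all of them once `x ≫ log k`.
-/

noncomputable def spin (b : Bool) : ℝ := if b then 1 else -1

section Hoeffding

variable {ι : Type*} [Fintype ι] [DecidableEq ι]

theorem sum_exp_sum_mul_spin (a : ι → ℝ) :
    ∑ σ : ι → Bool, exp (∑ p, a p * spin (σ p)) = ∏ p, 2 * cosh (a p) := by
  calc ∑ σ : ι → Bool, exp (∑ p, a p * spin (σ p))
      = ∑ σ : ι → Bool, ∏ p, exp (a p * spin (σ p)) := by simp_rw [exp_sum]
    _ = ∏ p, ∑ b : Bool, exp (a p * spin b) := (Fintype.prod_sum fun p b => exp (a p * spin b)).symm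
    _ = ∏ p, 2 * cosh (a p) := by
        simp [spin, cosh_eq, mul_div_cancel₀]

theorem sum_exp_sum_mul_spin_le (a : ι → ℝ) :
    ∑ σ : ι → Bool, exp (∑ p, a p * spin (σ p)) ≤
      2 ^ Fintype.card ι * exp ((∑ p, a p ^ 2) / 2) := by
  rw [sum_exp_sum_mul_spin]
  calc ∏ p, 2 * cosh (a p) ≤ ∏ p, 2 * exp (a p ^ 2 / 2) :=
        prod_le_prod (fun p _ => by positivity)
          fun p _ => mul_le_mul_of_nonneg_left (cosh_le_exp_half_sq _) zero_le_two
    _ = 2 ^ Fintype.card ι * exp ((∑ p, a p ^ 2) / 2) := by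
        rw [prod_mul_distrib, prod_const, ← exp_sum, sum_div, card_univ]

theorem card_lt_sum_mul_spin_le (c : ι → ℝ) {t M : ℝ} (ht : 0 ≤ t) (hM : 0 < M)
    (hc : ∑ p, c p ^ 2 ≤ M) :
    (#{σ : ι → Bool | t < ∑ p, c p * spin (σ p)} : ℝ) ≤
      2 ^ Fintype.card ι * exp (-t ^ 2 / (2 * M)) := by
  set l := t / M
  have hl : 0 ≤ l := by positivity
  have markov : (#{σ : ι → Bool | t < ∑ p, c p * spin (σ p)} : ℝ) * exp (l * t) ≤
      ∑ σ : ι → Bool, exp (∑ p, l * c p * spin (σ p)) := by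
    rw [← nsmul_eq_mul]
    refine (card_nsmul_le_sum _ _ _ fun σ hσ => ?_).trans
      (sum_le_sum_of_subset_of_nonneg (filter_subset _ _) fun _ _ _ => (exp_pos _).le)
    simp only [mul_assoc, ← mul_sum]
    exact exp_le_exp.2 (mul_le_mul_of_nonneg_left (mem_filter.1 hσ).2.le hl)
  have mgf : (∑ p, (l * c p) ^ 2) / 2 ≤ l ^ 2 * M / 2 := by
    simp only [mul_pow, ← mul_sum]
    gcongr
  have exponent : l ^ 2 * M / 2 - l * t = -t ^ 2 / (2 * M) := by
    simp only [l]
    field_simp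
    ring
  rw [← exponent, exp_sub, ← mul_div_assoc, le_div_iff₀ (exp_pos _)]
  exact markov.trans ((sum_exp_sum_mul_spin_le _).trans (by gcongr))

end Hoeffding

theorem exists_forall_not_of_sum_card_lt {α β : Type*} [Fintype α] (F : Finset β)
    (P : β → α → Prop) (h : ∑ b ∈ F, (#{a | P b a} : ℝ) < Fintype.card α) :
    ∃ a, ∀ b ∈ F, ¬ P b a := by
  by_contra! hP
  have hcover : (univ : Finset α) ⊆ F.biUnion fun b => {a | P b a} := fun a _ => by
    simpa using hP a
  have := (card_le_card hcover).trans card_biUnion_le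
  rw [card_univ] at this
  exact h.not_ge (by exact_mod_cast this)

theorem card_filter_card_le_le_pow {α : Type*} [Fintype α] (m : ℕ) :
    #{A : Finset α | #A ≤ m} ≤ (Fintype.card α + 1) ^ m := by
  have hcover : ({A : Finset α | #A ≤ m} : Finset (Finset α)) ⊆
      (range (m + 1)).biUnion fun j => powersetCard j univ := fun A hA => by
    simp only [mem_filter] at hA
    simpa [mem_powersetCard, Nat.lt_succ_iff] using hA
  calc #{A : Finset α | #A ≤ m} ≤ ∑ j ∈ range (m + 1), (Fintype.card α).choose j :=
        (card_le_card hcover).trans (card_biUnion_le.trans_eq (by simp))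
    _ ≤ ∑ j ∈ range (m + 1), Fintype.card α ^ j * 1 ^ (m - j) * m.choose j := by
        refine sum_le_sum fun j hj => ?_
        have : 1 ≤ m.choose j := Nat.choose_pos (Nat.lt_succ_iff.1 (mem_range.1 hj))
        calc (Fintype.card α).choose j ≤ Fintype.card α ^ j := Nat.choose_le_pow _ _
          _ ≤ _ := by simpa using Nat.le_mul_of_pos_right _ this
    _ = (Fintype.card α + 1) ^ m := (add_pow _ _ _).symm

theorem Finset.exists_subset_card_eq_forall_sdiff_le {ι β : Type*} [LinearOrder β] (c : ι → β)
    (T : Finset ι) :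
    ∀ m ≤ #T, ∃ S ⊆ T, #S = m ∧ ∀ i ∈ T \ S, ∀ j ∈ S, c i ≤ c j := by
  intro m
  induction m with
  | zero => exact fun _ => ⟨∅, empty_subset _, card_empty, by simp⟩
  | succ m ih =>
    intro hm
    obtain ⟨S, hST, hS, htop⟩ := ih (by omega)
    have hne : (T \ S).Nonempty := by
      rw [← card_pos, card_sdiff_of_subset hST]
      omega
    obtain ⟨i₀, hi₀, hmax⟩ := (T \ S).exists_max_image c hne
    refine ⟨insert i₀ S, insert_subset (sdiff_subset hi₀) hST, ?_, fun i hi j hj => ?_⟩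
    · rw [card_insert_of_notMem (mem_sdiff.1 hi₀).2, hS]
    · have hiS : i ∈ T \ S := by
        simp only [mem_sdiff, mem_insert, not_or] at hi ⊢
        exact ⟨hi.1, hi.2.2⟩
      rcases mem_insert.1 hj with rfl | hj
      · exact hmax i hiS
      · exact htop i hiS j hj

section Selection

variable {ι : Type*} [Fintype ι] {f : ι → ℝ}

theorem sum_mul_le_sum_of_threshold (c : ι → ℝ) (hf0 : ∀ i, 0 ≤ f i) (hf1 : ∀ i, f i ≤ 1)
    (S : Finset ι) (θ : ℝ) (hin : ∀ i ∈ S, θ ≤ c i) (hout : ∀ i ∉ S, c i ≤ θ)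
    (hθ : θ * ∑ i, f i ≤ θ * #S) :
    ∑ i, f i * c i ≤ ∑ i ∈ S, c i := by
  have hpoint : ∀ i, f i * c i ≤ θ * f i + if i ∈ S then c i - θ else 0 := fun i => by
    split_ifs with hi
    · nlinarith [hin i hi, hf0 i, hf1 i]
    · nlinarith [hout i hi, hf0 i]
  calc ∑ i, f i * c i ≤ ∑ i, (θ * f i + if i ∈ S then c i - θ else 0) :=
        sum_le_sum fun i _ => hpoint i
    _ = θ * ∑ i, f i + (∑ i ∈ S, c i - θ * #S) := by
        rw [sum_add_distrib, ← mul_sum, sum_ite_mem, univ_inter, sum_sub_distrib, sum_const,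
          nsmul_eq_mul]
        ring
    _ ≤ ∑ i ∈ S, c i := by linarith

theorem exists_card_le_sum_mul_le (c : ι → ℝ) (hf0 : ∀ i, 0 ≤ f i) (hf1 : ∀ i, f i ≤ 1)
    {m : ℕ} (hf : ∑ i, f i ≤ m) :
    ∃ S : Finset ι, #S ≤ m ∧ ∑ i, f i * c i ≤ ∑ i ∈ S, c i := by
  set P : Finset ι := {i | 0 < c i}
  by_cases hP : #P ≤ m
  · refine ⟨P, hP, sum_mul_le_sum_of_threshold c hf0 hf1 P 0 (fun i hi => ?_) (fun i hi => ?_)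
      (by simp)⟩
    · exact (mem_filter.1 hi).2.le
    · simpa [P] using hi
  -- the threshold is the largest positive coefficient left out of the top `m`
  obtain ⟨S, hSP, hS, htop⟩ := P.exists_subset_card_eq_forall_sdiff_le c m (by omega)
  have hne : (P \ S).Nonempty := by
    rw [← card_pos, card_sdiff_of_subset hSP]
    omega
  obtain ⟨i₀, hi₀, hmax⟩ := (P \ S).exists_max_image c hne
  have hθ : 0 < c i₀ := (mem_filter.1 (mem_sdiff.1 hi₀).1).2
  refine ⟨S, hS.le, sum_mul_le_sum_of_threshold c hf0 hf1 S (c i₀) (fun j hj => htop i₀ hi₀ j hj)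
    (fun i hi => ?_) (by rw [hS]; gcongr)⟩
  by_cases hiP : i ∈ P
  · exact hmax i (mem_sdiff.2 ⟨hiP, hi⟩)
  · exact (not_lt.1 fun h => hiP (mem_filter.2 ⟨mem_univ _, h⟩)).trans hθ.le

end Selection

theorem exists_card_le_sum_sum_mul_le {ι κ : Type*} [Fintype ι] [Fintype κ] (s : ι → κ → ℝ)
    {f : ι → ℝ} {g : κ → ℝ} (hf0 : ∀ i, 0 ≤ f i) (hf1 : ∀ i, f i ≤ 1)
    (hg0 : ∀ j, 0 ≤ g j) (hg1 : ∀ j, g j ≤ 1) {m : ℕ} (hf : ∑ i, f i ≤ m) (hg : ∑ j, g j ≤ m) :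
    ∃ A B, #A ≤ m ∧ #B ≤ m ∧ ∑ i, ∑ j, f i * g j * s i j ≤ ∑ i ∈ A, ∑ j ∈ B, s i j := by
  obtain ⟨A, hA, hfA⟩ := exists_card_le_sum_mul_le (fun i => ∑ j, g j * s i j) hf0 hf1 hf
  obtain ⟨B, hB, hgB⟩ := exists_card_le_sum_mul_le (fun j => ∑ i ∈ A, s i j) hg0 hg1 hg
  refine ⟨A, B, hA, hB, ?_⟩
  calc ∑ i, ∑ j, f i * g j * s i j = ∑ i, f i * ∑ j, g j * s i j := by
        simp only [mul_sum, mul_assoc]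
    _ ≤ ∑ i ∈ A, ∑ j, g j * s i j := hfA
    _ = ∑ j, g j * ∑ i ∈ A, s i j := by rw [sum_comm]; simp only [mul_sum]
    _ ≤ ∑ j ∈ B, ∑ i ∈ A, s i j := hgB
    _ = ∑ i ∈ A, ∑ j ∈ B, s i j := sum_comm

theorem two_mul_sum_sum_ite_le {α : Type*} [Fintype α] (R : α → α → Prop)
    (hR : ∀ i j, R i j → ¬ R j i) {f g : α → ℝ} (hf0 : ∀ i, 0 ≤ f i) (hg0 : ∀ j, 0 ≤ g j) :
    2 * ∑ i, ∑ j, (if R i j then f i * g j else 0) ≤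
      (∑ i, f i) * (∑ j, g j) +
        ∑ i, ∑ j, f i * g j * ((if R i j then 1 else 0) - (if R j i then 1 else 0)) := by
  rw [sum_mul_sum, mul_sum, ← sum_add_distrib]
  refine sum_le_sum fun i _ => ?_
  rw [mul_sum, ← sum_add_distrib]
  refine sum_le_sum fun j _ => ?_
  have := mul_nonneg (hf0 i) (hg0 j)
  by_cases hij : R i j
  · simp [hij, hR i j hij]
    linarith
  · split_ifs <;> linarith

section RandomTournament

variable {α : Type*} [LinearOrder α]

def tournamentOf (σ : α × α → Bool) (i j : α) : Prop :=
  (i < j ∧ σ (i, j)) ∨ (j < i ∧ σ (j, i) = false)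

theorem tournamentOf_irrefl (σ : α × α → Bool) (i : α) : ¬ tournamentOf σ i i := by
  simp [tournamentOf]

theorem tournamentOf_iff_not (σ : α × α → Bool) {i j : α} (hij : i ≠ j) :
    tournamentOf σ i j ↔ ¬ tournamentOf σ j i := by
  rcases hij.lt_or_gt with h | h <;> cases σ (i, j) <;> cases σ (j, i) <;>
    simp [tournamentOf, h, h.not_gt]

theorem tournamentOf_asymm (σ : α × α → Bool) {i j : α} (h : tournamentOf σ i j) :
    ¬ tournamentOf σ j i :=
  (tournamentOf_iff_not σ (by rintro rfl; exact tournamentOf_irrefl σ i h)).1 h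

noncomputable def skewCoeff (A B : Finset α) (p : α × α) : ℝ :=
  ((if p ∈ A ×ˢ B then 1 else 0) - (if p ∈ B ×ˢ A then 1 else 0)) * (if p.1 < p.2 then 1 else 0)

theorem sum_sq_skewCoeff_le [Fintype α] (A B : Finset α) :
    ∑ p, skewCoeff A B p ^ 2 ≤ 2 * #A * #B := by
  calc ∑ p, skewCoeff A B p ^ 2
      ≤ ∑ p, ((if p ∈ A ×ˢ B then 1 else 0) + (if p ∈ B ×ˢ A then 1 else 0)) :=
        sum_le_sum fun p _ => by unfold skewCoeff; split_ifs <;> norm_num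
    _ = 2 * #A * #B := by
        simp only [sum_add_distrib, sum_boole, filter_mem_eq_inter, univ_inter, card_product]
        push_cast
        ring

theorem sum_sum_tournamentOf_sub (σ : α × α → Bool) [Fintype α] (A B : Finset α) :
    ∑ i ∈ A, ∑ j ∈ B,
        ((if tournamentOf σ i j then 1 else 0) - (if tournamentOf σ j i then 1 else 0)) =
      ∑ p, skewCoeff A B p * spin (σ p) := by
  set e : α × α → ℝ := fun p => if p.1 < p.2 then spin (σ p) else 0
  have hskew : ∀ i j, ((if tournamentOf σ i j then 1 else 0) -
      (if tournamentOf σ j i then 1 else 0) : ℝ) = e (i, j) - e (j, i) := fun i j => by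
    rcases lt_trichotomy i j with h | rfl | h
    · cases hb : σ (i, j) <;> simp [e, tournamentOf, spin, h, h.not_gt, hb]
    · simp [e, tournamentOf]
    · cases hb : σ (j, i) <;> simp [e, tournamentOf, spin, h, h.not_gt, hb]
  simp only [hskew, sum_sub_distrib]
  rw [← sum_product A B e, sum_comm, ← sum_product B A e, ← univ_inter (A ×ˢ B), ← sum_ite_mem,
    ← univ_inter (B ×ˢ A), ← sum_ite_mem, ← sum_sub_distrib]
  refine sum_congr rfl fun p _ => ?_
  simp only [skewCoeff, e]
  split_ifs <;> ring

theorem exists_forall_sum_sum_tournamentOf_le [Fintype α] {m : ℕ} (hm : 0 < m) {t : ℝ}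
    (ht : 0 ≤ t) (h : ((Fintype.card α : ℝ) + 1) ^ (2 * m) * exp (-t ^ 2 / (4 * m ^ 2)) < 1) :
    ∃ σ : α × α → Bool, ∀ A B : Finset α, #A ≤ m → #B ≤ m →
      ∑ i ∈ A, ∑ j ∈ B,
        ((if tournamentOf σ i j then 1 else 0) - (if tournamentOf σ j i then 1 else 0)) ≤ t := by
  set N := Fintype.card (α × α)
  set E := exp (-t ^ 2 / (4 * m ^ 2))
  set small : Finset (Finset α) := {A | #A ≤ m}
  have hbad : ∀ AB ∈ small ×ˢ small, (#{σ : α × α → Bool | t < ∑ i ∈ AB.1, ∑ j ∈ AB.2,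
      ((if tournamentOf σ i j then 1 else 0) - (if tournamentOf σ j i then 1 else 0))} : ℝ) ≤
        2 ^ N * E := by
    rintro ⟨A, B⟩ hAB
    simp only [small, mem_product, mem_filter_univ] at hAB
    have hA : (#A : ℝ) ≤ m := by exact_mod_cast hAB.1
    have hB : (#B : ℝ) ≤ m := by exact_mod_cast hAB.2
    have hsq : ∑ p, skewCoeff A B p ^ 2 ≤ 2 * m ^ 2 :=
      (sum_sq_skewCoeff_le A B).trans (by nlinarith)
    simp_rw [sum_sum_tournamentOf_sub]
    convert card_lt_sum_mul_spin_le (skewCoeff A B) ht (by positivity) hsq using 4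
    ring
  have hsmall : (#small : ℝ) ≤ (Fintype.card α + 1) ^ m := by
    exact_mod_cast card_filter_card_le_le_pow m
  have hcount : ∑ AB ∈ small ×ˢ small, (#{σ : α × α → Bool | t < ∑ i ∈ AB.1, ∑ j ∈ AB.2,
      ((if tournamentOf σ i j then 1 else 0) - (if tournamentOf σ j i then 1 else 0))} : ℝ) <
        Fintype.card (α × α → Bool) :=
    calc _ ≤ ∑ _AB ∈ small ×ˢ small, 2 ^ N * E := sum_le_sum hbad
      _ = #small * #small * (2 ^ N * E) := by
          rw [sum_const, card_product, nsmul_eq_mul]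
          push_cast
          ring
      _ ≤ (Fintype.card α + 1) ^ m * (Fintype.card α + 1) ^ m * (2 ^ N * E) := by gcongr
      _ = 2 ^ N * ((Fintype.card α + 1) ^ (2 * m) * E) := by ring
      _ < 2 ^ N * 1 := by gcongr
      _ = Fintype.card (α × α → Bool) := by simp [N]
  obtain ⟨σ, hσ⟩ := exists_forall_not_of_sum_card_lt _ _ hcount
  exact ⟨σ, fun A B hA hB => not_lt.1 (hσ (A, B) (by simp [small, hA, hB]))⟩

end RandomTournament

theorem add_one_pow_mul_exp_lt_one {k : ℕ} (hk : 2 ≤ k) {x : ℝ} (hx : 10 ^ 8 * log k / 2 ≤ x) :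
    ((k : ℝ) + 1) ^ (2 * ⌈2 * x⌉₊) * exp (-(0.02 * x ^ 2) ^ 2 / (4 * (⌈2 * x⌉₊ : ℝ) ^ 2)) < 1 := by
  set m := ⌈2 * x⌉₊
  have hk2 : (2 : ℝ) ≤ k := by exact_mod_cast hk
  have hlogk : 0.69 ≤ log k :=
    (log_two_gt_d9.le.trans' (by norm_num)).trans (log_le_log two_pos hk2)
  have hx1 : 1 ≤ x := by nlinarith
  have hm1 : 2 * x ≤ m := Nat.le_ceil _
  have hm2 : (m : ℝ) ≤ 3 * x := (Nat.ceil_lt_add_one (by positivity)).le.trans (by linarith)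
  have hlog : log (k + 1) ≤ 2 * log k := by
    calc log (k + 1) ≤ log ((k : ℝ) ^ 2) := log_le_log (by positivity) (by nlinarith)
      _ = 2 * log k := by simp [log_pow]
  have hgain : 2 * m * log (k + 1) ≤ x ^ 2 / 10 ^ 6 := by
    have := log_nonneg (by linarith : (1 : ℝ) ≤ k + 1)
    nlinarith
  have hloss : x ^ 2 / 90000 ≤ (0.02 * x ^ 2) ^ 2 / (4 * (m : ℝ) ^ 2) := by
    have hmsq : (m : ℝ) ^ 2 ≤ 9 * x ^ 2 := by nlinarith
    rw [le_div_iff₀ (by positivity)]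
    nlinarith [mul_le_mul_of_nonneg_left hmsq (sq_nonneg x)]
  rw [← exp_log (by positivity : (0 : ℝ) < k + 1), ← exp_nat_mul, ← exp_add, exp_lt_one_iff]
  push_cast
  rw [neg_div]
  linarith [pow_pos (by linarith : 0 < x) 2]

/-- The host tournament lemma: for `k ≥ 2` and real `x ≥ (10^8·log k)/2` there is a
tournament `R` on `[k]` such that for all weight functions `f, g : [k] → [0,1]` with
`f + g ≤ 1` pointwise and `Σᵢ (f(i)+g(i)) = 2x`, we have `Σ_{(i,j)∈E(R)} f(i)g(j) ≤ 0.51x²`. -/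
theorem host_tournament_lemma (k : ℕ) (hk : 2 ≤ k) (x : ℝ)
    (hx : (10 : ℝ) ^ 8 * Real.log k / 2 ≤ x) :
    ∃ R : Fin k → Fin k → Prop, (∀ i, ¬ R i i) ∧
      (∀ i j : Fin k, i ≠ j → (R i j ↔ ¬ R j i)) ∧
      ∀ f g : Fin k → ℝ,
        (∀ i, 0 ≤ f i) → (∀ i, 0 ≤ g i) → (∀ i, f i ≤ 1) → (∀ i, g i ≤ 1) →
        (∀ i, f i + g i ≤ 1) → (∑ i : Fin k, (f i + g i)) = 2 * x →
        ∑ i : Fin k, ∑ j : Fin k, (if R i j then f i * g j else 0) ≤ 0.51 * x ^ 2 := by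
  have hx0 : 0 < x := hx.trans_lt' (by have := log_pos (Nat.one_lt_cast.2 hk); positivity)
  obtain ⟨σ, hσ⟩ := exists_forall_sum_sum_tournamentOf_le (α := Fin k) (m := ⌈2 * x⌉₊)
    (Nat.ceil_pos.2 (by positivity)) (t := 0.02 * x ^ 2) (by positivity)
    (by simpa using add_one_pow_mul_exp_lt_one hk hx)
  refine ⟨tournamentOf σ, tournamentOf_irrefl σ, fun i j => tournamentOf_iff_not σ, ?_⟩
  intro f g hf0 hg0 hf1 hg1 _ hsum
  rw [sum_add_distrib] at hsum
  have hf : ∑ i, f i ≤ ⌈2 * x⌉₊ :=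
    (Nat.le_ceil _).trans' (by linarith [sum_nonneg fun i (_ : i ∈ univ) => hg0 i])
  have hg : ∑ i, g i ≤ ⌈2 * x⌉₊ :=
    (Nat.le_ceil _).trans' (by linarith [sum_nonneg fun i (_ : i ∈ univ) => hf0 i])
  obtain ⟨A, B, hA, hB, hskew⟩ := exists_card_le_sum_sum_mul_le _ hf0 hf1 hg0 hg1 hf hg
  have hprod : (∑ i, f i) * (∑ i, g i) ≤ x ^ 2 := by nlinarith [sq_nonneg (∑ i, f i - ∑ i, g i)]
  have hweight := two_mul_sum_sum_ite_le (tournamentOf σ) (fun _ _ => tournamentOf_asymm σ) hf0 hg0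
  linarith [hσ A B hA hB]
end

section
/- Let R be a tournament on vertex set [k] and let f, g : [k] → [0,1] maximize W = Σ_{(i,j) ∈ E(R)} f(i)g(j) subject to f + g ≤ 1 pointwise and Σ_i (f(i)+g(i)) = 2x. Then there exist maximizers f, g and indices i_0, j_0 such that f(i) ∈ {0,1} for all i ≠ i_0 and g(j) ∈ {0,1} for all j ≠ j_0. -/
open scoped Classical

namespace ExtremalAux

variable {k : ℕ}

noncomputable def Wb (R : Fin k → Fin k → Prop) (f g : Fin k → ℝ) : ℝ :=
  ∑ i : Fin k, ∑ j : Fin k, if R i j then f i * g j else 0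

noncomputable def colS (R : Fin k → Fin k → Prop) (g : Fin k → ℝ) (i : Fin k) : ℝ :=
  ∑ j : Fin k, if R i j then g j else 0

noncomputable def rowS (R : Fin k → Fin k → Prop) (f : Fin k → ℝ) (j : Fin k) : ℝ :=
  ∑ i : Fin k, if R i j then f i else 0

def Feas (x : ℝ) (f g : Fin k → ℝ) : Prop :=
  (∀ i, 0 ≤ f i) ∧ (∀ i, 0 ≤ g i) ∧ (∀ i, f i ≤ 1) ∧ (∀ i, g i ≤ 1) ∧
  (∀ i, f i + g i ≤ 1) ∧ (∑ i : Fin k, (f i + g i)) = 2 * x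

noncomputable def Phi (f g : Fin k → ℝ) : ℝ :=
  (∑ i : Fin k, f i * (1 - f i)) + ∑ i : Fin k, g i * (1 - g i)

lemma sum_q_update (q : ℝ → ℝ) (f : Fin k → ℝ) (i : Fin k) (c : ℝ) :
    ∑ a : Fin k, q (Function.update f i c a)
      = (∑ a : Fin k, q (f a)) + (q c - q (f i)) := by
  have h : ∀ a : Fin k, q (Function.update f i c a)
      = q (f a) + (if a = i then q c - q (f i) else 0) := by
    intro a
    by_cases ha : a = i
    · subst ha; simp
    · simp [Function.update_of_ne ha, ha]
  simp only [h, Finset.sum_add_distrib, Finset.sum_ite_eq' Finset.univ,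
    Finset.mem_univ, if_pos]

lemma sum_update (f : Fin k → ℝ) (i : Fin k) (c : ℝ) :
    ∑ a : Fin k, Function.update f i c a = (∑ a : Fin k, f a) + (c - f i) :=
  sum_q_update (fun t => t) f i c

lemma sum_phi_update (f : Fin k → ℝ) (i : Fin k) (c : ℝ) :
    ∑ a : Fin k, Function.update f i c a * (1 - Function.update f i c a)
      = (∑ a : Fin k, f a * (1 - f a)) + (c * (1 - c) - f i * (1 - f i)) :=
  sum_q_update (fun t => t * (1 - t)) f i c

lemma Wb_update_left (R : Fin k → Fin k → Prop) (f g : Fin k → ℝ) (i : Fin k) (c : ℝ) :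
    Wb R (Function.update f i c) g = Wb R f g + (c - f i) * colS R g i := by
  have h : ∀ a : Fin k, (∑ j : Fin k, if R a j then Function.update f i c a * g j else 0)
      = (∑ j : Fin k, if R a j then f a * g j else 0)
        + (if a = i then (c - f i) * colS R g i else 0) := by
    intro a
    by_cases ha : a = i
    · subst ha
      rw [if_pos rfl, colS, Finset.mul_sum, ← Finset.sum_add_distrib]
      refine Finset.sum_congr rfl fun j _ => ?_
      by_cases h : R a j <;> simp [h, Function.update_self] <;> ring
    · simp [Function.update_of_ne ha, ha]
  simp only [Wb, h, Finset.sum_add_distrib, Finset.sum_ite_eq' Finset.univ,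
    Finset.mem_univ, if_pos]

lemma Wb_update_right (R : Fin k → Fin k → Prop) (f g : Fin k → ℝ) (j : Fin k) (c : ℝ) :
    Wb R f (Function.update g j c) = Wb R f g + (c - g j) * rowS R f j := by
  have h : ∀ a : Fin k, (∑ b : Fin k, if R a b then f a * Function.update g j c b else 0)
      = (∑ b : Fin k, if R a b then f a * g b else 0)
        + (if R a j then f a * (c - g j) else 0) := by
    intro a
    have h2 : ∀ b : Fin k, (if R a b then f a * Function.update g j c b else 0)
        = (if R a b then f a * g b else 0)
          + (if b = j then (if R a b then f a * (c - g j) else 0) else 0) := by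
      intro b
      by_cases hb : b = j
      · subst hb
        by_cases h : R a b <;> simp [h] <;> ring
      · simp [Function.update_of_ne hb, hb]
    rw [Finset.sum_congr rfl fun b _ => h2 b, Finset.sum_add_distrib]
    simp [Finset.sum_ite_eq' Finset.univ]
  simp only [Wb, h, Finset.sum_add_distrib]
  congr 1
  rw [rowS, Finset.mul_sum]
  refine Finset.sum_congr rfl fun a _ => ?_
  by_cases h : R a j <;> simp [h] <;> ring

lemma rowS_update_self (R : Fin k → Fin k → Prop) (i : Fin k) (hirr : ¬ R i i)
    (f : Fin k → ℝ) (c : ℝ) :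
    rowS R (Function.update f i c) i = rowS R f i := by
  refine Finset.sum_congr rfl fun a _ => ?_
  by_cases ha : a = i
  · subst ha; simp [hirr]
  · simp [Function.update_of_ne ha]

lemma perturb {α : Type*} {S : Set α} {Wf Φf : α → ℝ} {p : ℝ → α} {a b c c' : ℝ}
    (ha : a < 0) (hb : 0 < b)
    (hfeas : ∀ δ ∈ Set.Icc a b, p δ ∈ S)
    (hW : ∀ δ ∈ Set.Icc a b, Wf (p δ) = Wf (p 0) + c * δ)
    (hΦ : ∀ δ ∈ Set.Icc a b, Φf (p δ) = Φf (p 0) + c' * δ - 2 * δ ^ 2)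
    (hmax : ∀ q ∈ S, Wf q ≤ Wf (p 0))
    (hmin : ∀ q ∈ S, Wf q = Wf (p 0) → Φf (p 0) ≤ Φf q) : False := by
  have hab : a ≤ b := le_of_lt (ha.trans hb)
  have hmema : a ∈ Set.Icc a b := ⟨le_refl _, hab⟩
  have hmemb : b ∈ Set.Icc a b := ⟨hab, le_refl _⟩
  have hca : c * a ≤ 0 := by
    have h := hmax _ (hfeas a hmema); rw [hW a hmema] at h; linarith
  have hcb : c * b ≤ 0 := by
    have h := hmax _ (hfeas b hmemb); rw [hW b hmemb] at h; linarith
  have hc : c = 0 := by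
    rcases lt_trichotomy c 0 with h | h | h
    · nlinarith
    · exact h
    · nlinarith
  set δ : ℝ := if 0 ≤ c' then a else b with hδ
  have hδmem : δ ∈ Set.Icc a b := by
    rw [hδ]; split_ifs <;> [exact hmema; exact hmemb]
  have hδ2 : 0 < δ ^ 2 := by
    rw [hδ]; split_ifs
    · have h0 : a ≠ 0 := ne_of_lt ha
      positivity
    · positivity
  have hc'δ : c' * δ ≤ 0 := by
    rw [hδ]; split_ifs with h
    · nlinarith
    · nlinarith
  have hWδ : Wf (p δ) = Wf (p 0) := by rw [hW δ hδmem, hc]; ring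
  have h := hmin _ (hfeas δ hδmem) hWδ
  rw [hΦ δ hδmem] at h
  nlinarith

lemma moveB (R : Fin k → Fin k → Prop) (hirr : ∀ i, ¬ R i i) (x : ℝ) (f g : Fin k → ℝ)
    (hfe : Feas x f g)
    (hmax : ∀ f' g', Feas x f' g' → Wb R f' g' ≤ Wb R f g)
    (hmin : ∀ f' g', Feas x f' g' → Wb R f' g' = Wb R f g → Phi f g ≤ Phi f' g')
    (i : Fin k) (h1 : f i + g i = 1) (h2 : 0 < f i) (h3 : f i < 1) : False := by
  obtain ⟨hf0, hg0, hf1, hg1, hfg, hsum⟩ := hfe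
  set p : ℝ → (Fin k → ℝ) × (Fin k → ℝ) :=
    fun δ => (Function.update f i (f i + δ), Function.update g i (g i - δ)) with hp
  have hp0 : p 0 = (f, g) := by
    simp only [hp, add_zero, sub_zero, Function.update_eq_self]
  have hgi : 0 < g i := by linarith
  have hfeas : ∀ δ ∈ Set.Icc (-(f i)) (g i),
      p δ ∈ {q : (Fin k → ℝ) × (Fin k → ℝ) | Feas x q.1 q.2} := by
    rintro δ ⟨hδ1, hδ2⟩
    refine ⟨?_, ?_, ?_, ?_, ?_, ?_⟩
    · intro a
      by_cases ha : a = i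
      · subst ha; simp only [hp, Function.update_self]; linarith
      · simpa [hp, Function.update_of_ne ha] using hf0 a
    · intro a
      by_cases ha : a = i
      · subst ha; simp only [hp, Function.update_self]; linarith
      · simpa [hp, Function.update_of_ne ha] using hg0 a
    · intro a
      by_cases ha : a = i
      · subst ha; simp only [hp, Function.update_self]; linarith
      · simpa [hp, Function.update_of_ne ha] using hf1 a
    · intro a
      by_cases ha : a = i
      · subst ha; simp only [hp, Function.update_self]; linarith
      · simpa [hp, Function.update_of_ne ha] using hg1 a
    · intro a
      by_cases ha : a = i
      · subst ha; simp only [hp, Function.update_self]; linarith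
      · simpa [hp, Function.update_of_ne ha] using hfg a
    · simp only [hp]
      rw [Finset.sum_add_distrib, sum_update, sum_update, ← hsum, Finset.sum_add_distrib]
      ring
  have hW : ∀ δ ∈ Set.Icc (-(f i)) (g i),
      Wb R (p δ).1 (p δ).2 = Wb R (p 0).1 (p 0).2 + (colS R g i - rowS R f i) * δ := by
    intro δ _
    rw [hp0]
    simp only [hp]
    rw [Wb_update_right, rowS_update_self R i (hirr i), Wb_update_left]
    ring
  have hΦ : ∀ δ ∈ Set.Icc (-(f i)) (g i),
      Phi (p δ).1 (p δ).2 = Phi (p 0).1 (p 0).2 + (2 * (g i - f i)) * δ - 2 * δ ^ 2 := by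
    intro δ _
    rw [hp0]
    simp only [hp, Phi]
    rw [sum_phi_update, sum_phi_update]
    ring
  exact perturb (S := {q : (Fin k → ℝ) × (Fin k → ℝ) | Feas x q.1 q.2})
    (Wf := fun q => Wb R q.1 q.2) (Φf := fun q => Phi q.1 q.2) (p := p)
    (neg_neg_of_pos h2 : -(f i) < 0) hgi hfeas hW hΦ
    (by rw [hp0]; exact fun q hq => hmax q.1 q.2 hq)
    (by rw [hp0]; exact fun q hq hWq => hmin q.1 q.2 hq hWq)

lemma moveA (R : Fin k → Fin k → Prop) (x : ℝ) (f g : Fin k → ℝ)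
    (hfe : Feas x f g)
    (hmax : ∀ f' g', Feas x f' g' → Wb R f' g' ≤ Wb R f g)
    (hmin : ∀ f' g', Feas x f' g' → Wb R f' g' = Wb R f g → Phi f g ≤ Phi f' g')
    (i₁ i₂ : Fin k) (hne : i₁ ≠ i₂)
    (h1 : 0 < f i₁) (h2 : f i₁ + g i₁ < 1) (h3 : 0 < f i₂) (h4 : f i₂ + g i₂ < 1) :
    False := by
  obtain ⟨hf0, hg0, hf1, hg1, hfg, hsum⟩ := hfe
  set a : ℝ := -min (f i₁) (1 - f i₂ - g i₂) with hadef
  set b : ℝ := min (f i₂) (1 - f i₁ - g i₁) with hbdef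
  have ha : a < 0 := by
    have h : 0 < min (f i₁) (1 - f i₂ - g i₂) := lt_min h1 (by linarith)
    rw [hadef]; linarith
  have hb : 0 < b := lt_min h3 (by linarith)
  have ha1 : -(f i₁) ≤ a := by
    rw [hadef]; exact neg_le_neg (min_le_left _ _)
  have ha2 : -(1 - f i₂ - g i₂) ≤ a := by
    rw [hadef]; exact neg_le_neg (min_le_right _ _)
  have hb1 : b ≤ f i₂ := min_le_left _ _
  have hb2 : b ≤ 1 - f i₁ - g i₁ := min_le_right _ _
  set p : ℝ → (Fin k → ℝ) × (Fin k → ℝ) :=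
    fun δ => (Function.update (Function.update f i₁ (f i₁ + δ)) i₂ (f i₂ - δ), g) with hp
  have hupd : ∀ c δ : ℝ,
      Function.update (Function.update f i₁ (f i₁ + δ)) i₂ c i₁ = f i₁ + δ := by
    intro c δ; rw [Function.update_of_ne hne, Function.update_self]
  have hupd2 : ∀ δ : ℝ, Function.update f i₁ (f i₁ + δ) i₂ = f i₂ := by
    intro δ; rw [Function.update_of_ne (Ne.symm hne)]
  have hp0 : p 0 = (f, g) := by
    simp only [hp, add_zero, sub_zero, Function.update_eq_self]
  have hfeas : ∀ δ ∈ Set.Icc a b,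
      p δ ∈ {q : (Fin k → ℝ) × (Fin k → ℝ) | Feas x q.1 q.2} := by
    rintro δ ⟨hδ1, hδ2⟩
    have key : ∀ a' : Fin k, 0 ≤ (p δ).1 a' ∧ (p δ).1 a' + g a' ≤ 1 := by
      intro a'
      by_cases ha' : a' = i₂
      · subst ha'; simp only [hp, Function.update_self]
        constructor <;> linarith
      · by_cases ha'' : a' = i₁
        · subst ha''
          simp only [hp]
          rw [Function.update_of_ne ha', Function.update_self]
          constructor <;> linarith
        · simp only [hp, Function.update_of_ne ha', Function.update_of_ne ha'']
          constructor
          · exact hf0 a'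
          · exact hfg a'
    refine ⟨fun a' => (key a').1, hg0, fun a' => ?_, hg1, fun a' => (key a').2, ?_⟩
    · have := (key a').2; have := hg0 a'; linarith
    · simp only [hp]
      rw [Finset.sum_add_distrib, sum_update, sum_update, hupd2, ← hsum,
        Finset.sum_add_distrib]
      ring
  have hW : ∀ δ ∈ Set.Icc a b,
      Wb R (p δ).1 (p δ).2
        = Wb R (p 0).1 (p 0).2 + (colS R g i₁ - colS R g i₂) * δ := by
    intro δ _
    rw [hp0]
    simp only [hp]
    rw [Wb_update_left, Wb_update_left, hupd2]
    ring
  have hΦ : ∀ δ ∈ Set.Icc a b,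
      Phi (p δ).1 (p δ).2
        = Phi (p 0).1 (p 0).2 + (2 * (f i₂ - f i₁)) * δ - 2 * δ ^ 2 := by
    intro δ _
    rw [hp0]
    simp only [hp, Phi]
    rw [sum_phi_update, sum_phi_update, hupd2]
    ring
  exact perturb (S := {q : (Fin k → ℝ) × (Fin k → ℝ) | Feas x q.1 q.2})
    (Wf := fun q => Wb R q.1 q.2) (Φf := fun q => Phi q.1 q.2) (p := p)
    ha hb hfeas hW hΦ
    (by rw [hp0]; exact fun q hq => hmax q.1 q.2 hq)
    (by rw [hp0]; exact fun q hq hWq => hmin q.1 q.2 hq hWq)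

lemma moveA' (R : Fin k → Fin k → Prop) (x : ℝ) (f g : Fin k → ℝ)
    (hfe : Feas x f g)
    (hmax : ∀ f' g', Feas x f' g' → Wb R f' g' ≤ Wb R f g)
    (hmin : ∀ f' g', Feas x f' g' → Wb R f' g' = Wb R f g → Phi f g ≤ Phi f' g')
    (i₁ i₂ : Fin k) (hne : i₁ ≠ i₂)
    (h1 : 0 < g i₁) (h2 : f i₁ + g i₁ < 1) (h3 : 0 < g i₂) (h4 : f i₂ + g i₂ < 1) :
    False := by
  obtain ⟨hf0, hg0, hf1, hg1, hfg, hsum⟩ := hfe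
  set a : ℝ := -min (g i₁) (1 - f i₂ - g i₂) with hadef
  set b : ℝ := min (g i₂) (1 - f i₁ - g i₁) with hbdef
  have ha : a < 0 := by
    have h : 0 < min (g i₁) (1 - f i₂ - g i₂) := lt_min h1 (by linarith)
    rw [hadef]; linarith
  have hb : 0 < b := lt_min h3 (by linarith)
  have ha1 : -(g i₁) ≤ a := by
    rw [hadef]; exact neg_le_neg (min_le_left _ _)
  have ha2 : -(1 - f i₂ - g i₂) ≤ a := by
    rw [hadef]; exact neg_le_neg (min_le_right _ _)
  have hb1 : b ≤ g i₂ := min_le_left _ _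
  have hb2 : b ≤ 1 - f i₁ - g i₁ := min_le_right _ _
  set p : ℝ → (Fin k → ℝ) × (Fin k → ℝ) :=
    fun δ => (f, Function.update (Function.update g i₁ (g i₁ + δ)) i₂ (g i₂ - δ)) with hp
  have hupd2 : ∀ δ : ℝ, Function.update g i₁ (g i₁ + δ) i₂ = g i₂ := by
    intro δ; rw [Function.update_of_ne (Ne.symm hne)]
  have hp0 : p 0 = (f, g) := by
    simp only [hp, add_zero, sub_zero, Function.update_eq_self]
  have hfeas : ∀ δ ∈ Set.Icc a b,
      p δ ∈ {q : (Fin k → ℝ) × (Fin k → ℝ) | Feas x q.1 q.2} := by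
    rintro δ ⟨hδ1, hδ2⟩
    have key : ∀ a' : Fin k, 0 ≤ (p δ).2 a' ∧ f a' + (p δ).2 a' ≤ 1 := by
      intro a'
      by_cases ha' : a' = i₂
      · subst ha'; simp only [hp, Function.update_self]
        constructor <;> linarith
      · by_cases ha'' : a' = i₁
        · subst ha''
          simp only [hp]
          rw [Function.update_of_ne ha', Function.update_self]
          constructor <;> linarith
        · simp only [hp, Function.update_of_ne ha', Function.update_of_ne ha'']
          constructor
          · exact hg0 a'
          · exact hfg a'
    refine ⟨hf0, fun a' => (key a').1, hf1, fun a' => ?_, fun a' => (key a').2, ?_⟩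
    · have := (key a').2; have := hf0 a'; linarith
    · simp only [hp]
      rw [Finset.sum_add_distrib, sum_update, sum_update, hupd2, ← hsum,
        Finset.sum_add_distrib]
      ring
  have hW : ∀ δ ∈ Set.Icc a b,
      Wb R (p δ).1 (p δ).2
        = Wb R (p 0).1 (p 0).2 + (rowS R f i₁ - rowS R f i₂) * δ := by
    intro δ _
    rw [hp0]
    simp only [hp]
    rw [Wb_update_right, Wb_update_right, hupd2]
    ring
  have hΦ : ∀ δ ∈ Set.Icc a b,
      Phi (p δ).1 (p δ).2
        = Phi (p 0).1 (p 0).2 + (2 * (g i₂ - g i₁)) * δ - 2 * δ ^ 2 := by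
    intro δ _
    rw [hp0]
    simp only [hp, Phi]
    rw [sum_phi_update, sum_phi_update, hupd2]
    ring
  exact perturb (S := {q : (Fin k → ℝ) × (Fin k → ℝ) | Feas x q.1 q.2})
    (Wf := fun q => Wb R q.1 q.2) (Φf := fun q => Phi q.1 q.2) (p := p)
    ha hb hfeas hW hΦ
    (by rw [hp0]; exact fun q hq => hmax q.1 q.2 hq)
    (by rw [hp0]; exact fun q hq hWq => hmin q.1 q.2 hq hWq)

end ExtremalAux

open ExtremalAux in
/-- Among the weight functions `f, g : [k] → [0,1]` with `f + g ≤ 1` pointwise and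
`Σᵢ (f(i)+g(i)) = 2x`, there exist maximizers of `W = Σ_{(i,j)∈E(R)} f(i)g(j)` together
with indices `i₀, j₀` such that `f(i) ∈ {0,1}` for all `i ≠ i₀` and `g(j) ∈ {0,1}` for all
`j ≠ j₀` (assuming the constraint set is nonempty). -/
theorem extremal_maximizers (k : ℕ) (hk : 0 < k) (R : Fin k → Fin k → Prop)
    (hirr : ∀ i, ¬ R i i)
    (htour : ∀ i j : Fin k, i ≠ j → (R i j ↔ ¬ R j i))
    (x : ℝ)
    (hne : ∃ f g : Fin k → ℝ, (∀ i, 0 ≤ f i) ∧ (∀ i, 0 ≤ g i) ∧ (∀ i, f i ≤ 1) ∧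
      (∀ i, g i ≤ 1) ∧ (∀ i, f i + g i ≤ 1) ∧ (∑ i : Fin k, (f i + g i)) = 2 * x) :
    ∃ f g : Fin k → ℝ,
      ((∀ i, 0 ≤ f i) ∧ (∀ i, 0 ≤ g i) ∧ (∀ i, f i ≤ 1) ∧ (∀ i, g i ≤ 1) ∧
        (∀ i, f i + g i ≤ 1) ∧ (∑ i : Fin k, (f i + g i)) = 2 * x) ∧
      (∀ f' g' : Fin k → ℝ,
        (∀ i, 0 ≤ f' i) → (∀ i, 0 ≤ g' i) → (∀ i, f' i ≤ 1) → (∀ i, g' i ≤ 1) →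
        (∀ i, f' i + g' i ≤ 1) → (∑ i : Fin k, (f' i + g' i)) = 2 * x →
        (∑ i : Fin k, ∑ j : Fin k, (if R i j then f' i * g' j else 0)) ≤
        (∑ i : Fin k, ∑ j : Fin k, (if R i j then f i * g j else 0))) ∧
      ∃ i₀ j₀ : Fin k,
        (∀ i : Fin k, i ≠ i₀ → f i = 0 ∨ f i = 1) ∧
        (∀ j : Fin k, j ≠ j₀ → g j = 0 ∨ g j = 1) := by
  classical
  obtain ⟨f₀, g₀, h₀⟩ := hne
  set S : Set ((Fin k → ℝ) × (Fin k → ℝ)) := {q | Feas x q.1 q.2} with hS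
  have hSne : S.Nonempty := ⟨(f₀, g₀), h₀⟩
  have hWcont : Continuous (fun q : (Fin k → ℝ) × (Fin k → ℝ) => Wb R q.1 q.2) := by
    unfold Wb
    apply continuous_finset_sum
    intro i _
    apply continuous_finset_sum
    intro j _
    by_cases h : R i j
    · simp only [if_pos h]
      exact ((continuous_apply i).comp continuous_fst).mul
        ((continuous_apply j).comp continuous_snd)
    · simp only [if_neg h]
      exact continuous_const
  have hΦcont : Continuous (fun q : (Fin k → ℝ) × (Fin k → ℝ) => Phi q.1 q.2) := by
    unfold Phi
    apply Continuous.add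
    · apply continuous_finset_sum
      intro i _
      exact ((continuous_apply i).comp continuous_fst).mul
        (continuous_const.sub ((continuous_apply i).comp continuous_fst))
    · apply continuous_finset_sum
      intro i _
      exact ((continuous_apply i).comp continuous_snd).mul
        (continuous_const.sub ((continuous_apply i).comp continuous_snd))
  have hSclosed : IsClosed S := by
    rw [hS]
    simp only [Feas, Set.setOf_and, Set.setOf_forall]
    refine IsClosed.inter ?_ (IsClosed.inter ?_ (IsClosed.inter ?_ (IsClosed.inter ?_
      (IsClosed.inter ?_ ?_))))
    · exact isClosed_iInter fun i =>
        isClosed_le continuous_const ((continuous_apply i).comp continuous_fst)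
    · exact isClosed_iInter fun i =>
        isClosed_le continuous_const ((continuous_apply i).comp continuous_snd)
    · exact isClosed_iInter fun i =>
        isClosed_le ((continuous_apply i).comp continuous_fst) continuous_const
    · exact isClosed_iInter fun i =>
        isClosed_le ((continuous_apply i).comp continuous_snd) continuous_const
    · exact isClosed_iInter fun i =>
        isClosed_le (((continuous_apply i).comp continuous_fst).add
          ((continuous_apply i).comp continuous_snd)) continuous_const
    · exact isClosed_eq (continuous_finset_sum _ fun i _ =>
        ((continuous_apply i).comp continuous_fst).add
          ((continuous_apply i).comp continuous_snd)) continuous_const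
  have hScompact : IsCompact S := by
    have hbox : IsCompact ((Set.Icc (0 : Fin k → ℝ) 1) ×ˢ (Set.Icc (0 : Fin k → ℝ) 1)) :=
      isCompact_Icc.prod isCompact_Icc
    refine hbox.of_isClosed_subset hSclosed ?_
    rintro ⟨u, v⟩ ⟨h1, h2, h3, h4, -, -⟩
    constructor
    · rw [Set.mem_Icc]
      exact ⟨fun i => h1 i, fun i => h3 i⟩
    · rw [Set.mem_Icc]
      exact ⟨fun i => h2 i, fun i => h4 i⟩
  obtain ⟨p₀, hp₀S, hp₀max⟩ := hScompact.exists_isMaxOn hSne hWcont.continuousOn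
  have hp₀max' : ∀ q ∈ S, Wb R q.1 q.2 ≤ Wb R p₀.1 p₀.2 := fun q hq => hp₀max hq
  set M : Set ((Fin k → ℝ) × (Fin k → ℝ)) :=
    S ∩ {q | Wb R q.1 q.2 = Wb R p₀.1 p₀.2} with hM
  have hMcompact : IsCompact M :=
    hScompact.inter_right (isClosed_eq hWcont continuous_const)
  have hMne : M.Nonempty := ⟨p₀, hp₀S, rfl⟩
  obtain ⟨p₁, hp₁M, hp₁min⟩ := hMcompact.exists_isMinOn hMne hΦcont.continuousOn
  obtain ⟨hp₁S, hp₁W⟩ := hp₁M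
  have hp₁min' : ∀ q ∈ M, Phi p₁.1 p₁.2 ≤ Phi q.1 q.2 := fun q hq => hp₁min hq
  set f : Fin k → ℝ := p₁.1 with hf
  set g : Fin k → ℝ := p₁.2 with hg
  have hfe : Feas x f g := hp₁S
  have hmax : ∀ f' g', Feas x f' g' → Wb R f' g' ≤ Wb R f g := by
    intro f' g' h
    have h1 := hp₀max' (f', g') h
    have h2 : Wb R f g = Wb R p₀.1 p₀.2 := hp₁W
    rw [h2]
    exact h1
  have hmin : ∀ f' g', Feas x f' g' → Wb R f' g' = Wb R f g → Phi f g ≤ Phi f' g' := by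
    intro f' g' h hWeq
    exact hp₁min' (f', g') ⟨h, by simp only [Set.mem_setOf_eq]; rw [hWeq]; exact hp₁W⟩
  obtain ⟨hf0, hg0, hf1, hg1, hfg, hsum⟩ := hfe
  have hfe' : Feas x f g := ⟨hf0, hg0, hf1, hg1, hfg, hsum⟩
  -- fractional indices have slack
  have hslackf : ∀ i, f i ≠ 0 → f i ≠ 1 → f i + g i < 1 := by
    intro i hi0 hi1
    rcases lt_or_eq_of_le (hfg i) with h | h
    · exact h
    · exact absurd h (fun h => moveB R hirr x f g hfe' hmax hmin i h
        (lt_of_le_of_ne (hf0 i) (Ne.symm hi0)) (lt_of_le_of_ne (hf1 i) hi1))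
  have hslackg : ∀ i, g i ≠ 0 → g i ≠ 1 → f i + g i < 1 := by
    intro i hi0 hi1
    rcases lt_or_eq_of_le (hfg i) with h | h
    · exact h
    · exfalso
      have hg0' : 0 < g i := lt_of_le_of_ne (hg0 i) (Ne.symm hi0)
      have hg1' : g i < 1 := lt_of_le_of_ne (hg1 i) hi1
      exact moveB R hirr x f g hfe' hmax hmin i h (by linarith) (by linarith)
  have honef : ∀ i₁ i₂, i₁ ≠ i₂ → (f i₁ ≠ 0 ∧ f i₁ ≠ 1) → (f i₂ ≠ 0 ∧ f i₂ ≠ 1) → False := by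
    rintro i₁ i₂ hne12 ⟨h10, h11⟩ ⟨h20, h21⟩
    exact moveA R x f g hfe' hmax hmin i₁ i₂ hne12
      (lt_of_le_of_ne (hf0 i₁) (Ne.symm h10)) (hslackf i₁ h10 h11)
      (lt_of_le_of_ne (hf0 i₂) (Ne.symm h20)) (hslackf i₂ h20 h21)
  have honeg : ∀ i₁ i₂, i₁ ≠ i₂ → (g i₁ ≠ 0 ∧ g i₁ ≠ 1) → (g i₂ ≠ 0 ∧ g i₂ ≠ 1) → False := by
    rintro i₁ i₂ hne12 ⟨h10, h11⟩ ⟨h20, h21⟩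
    exact moveA' R x f g hfe' hmax hmin i₁ i₂ hne12
      (lt_of_le_of_ne (hg0 i₁) (Ne.symm h10)) (hslackg i₁ h10 h11)
      (lt_of_le_of_ne (hg0 i₂) (Ne.symm h20)) (hslackg i₂ h20 h21)
  refine ⟨f, g, ⟨hf0, hg0, hf1, hg1, hfg, hsum⟩, ?_, ?_⟩
  · intro f' g' a1 a2 a3 a4 a5 a6
    exact hmax f' g' ⟨a1, a2, a3, a4, a5, a6⟩
  · refine ⟨if h : ∃ i, f i ≠ 0 ∧ f i ≠ 1 then h.choose else ⟨0, hk⟩,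
      if h : ∃ j, g j ≠ 0 ∧ g j ≠ 1 then h.choose else ⟨0, hk⟩, ?_, ?_⟩
    · intro i hi
      by_contra hcon
      push_neg at hcon
      have hex : ∃ i, f i ≠ 0 ∧ f i ≠ 1 := ⟨i, hcon⟩
      rw [dif_pos hex] at hi
      exact honef i hex.choose (fun h => hi h) hcon hex.choose_spec
    · intro j hj
      by_contra hcon
      push_neg at hcon
      have hex : ∃ j, g j ≠ 0 ∧ g j ≠ 1 := ⟨j, hcon⟩
      rw [dif_pos hex] at hj
      exact honeg j hex.choose (fun h => hj h) hcon hex.choose_spec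
end
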